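/- Let f1 = U0 X1^2 + U1 X1 X2 + U2 X2^2 and f2 homogeneous of the same degree 2 (d1 = d2 = 2) with coefficients V0, V1, V2, forming a regular sequence over A. Then the two Sylvester forms of degree 1 are given explicitly by: sylv_{(0,1)}(f1,f2) = (U0 V2 − U2 V0) X1 + (U1 V2 − U2 V1) X2 = SRes_2(f1,f2) X2 − SRes_1(f1,f2) X1, and sylv_{(1,0)}(f1,f2) = (U0 V1 − U1 V0) X1 + (U0 V2 − U2 V0) X2 = SRes_0(f1,f2) X1 − SRes_1(f1,f2) X2. -/
import Mathlib


open MvPolynomial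

noncomputable section

/-- The `(δ+1) × δ` matrix whose signed maximal minors are the first-order
subresultants of two binary forms of degrees `d1, d2` with coefficient sequences
`U, V` (`U i` is the coefficient of `X1^{d1−i} X2^i`). -/
def subresMatrix {A : Type*} [CommRing A] (d1 d2 δ : ℕ) (U V : ℕ → A) :
    Matrix (Fin (δ + 1)) (Fin δ) A :=
  Matrix.of fun i j =>
    if (j : ℕ) < d2 - 1 then
      (if (j : ℕ) ≤ i ∧ (i : ℕ) ≤ (j : ℕ) + d1 then U ((i : ℕ) - j) else 0)
    else
      (if (j : ℕ) - (d2 - 1) ≤ i ∧ (i : ℕ) ≤ (j : ℕ) - (d2 - 1) + d2 then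
        V ((i : ℕ) - ((j : ℕ) - (d2 - 1))) else 0)

/-- The first-order subresultant `SRes_k(f1,f2)` (signed `δ`-minor, normalized by the
border expansion `det = Σ_i SRes_{δ−i} T_i` of the bordered Sylvester determinant). -/
def sres {A : Type*} [CommRing A] (d1 d2 δ : ℕ) (U V : ℕ → A) (k : ℕ) : A :=
  (-1 : A) ^ ((δ - k) + δ) *
    ((subresMatrix d1 d2 δ U V).submatrix
      (Fin.succAbove ⟨δ - k, Nat.lt_succ_of_le (Nat.sub_le δ k)⟩) id).det

/- Auxiliary lemmas -/

lemma stmt13.deg2 (m : Fin 2 →₀ ℕ) : m.degree = m 0 + m 1 := by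
  rw [Finsupp.degree, ← Fin.sum_univ_two (fun i => m i)]
  exact Finset.sum_subset (Finset.subset_univ _)
    (fun i _ hi => Finsupp.notMem_support_iff.mp hi)

lemma stmt13.hom0 {A : Type*} [CommRing A] (p : MvPolynomial (Fin 2) A)
    (h : p.IsHomogeneous 0) : p = C (coeff 0 p) := by
  ext m
  rcases eq_or_ne m 0 with rfl | hm
  · simp
  · rw [h.coeff_eq_zero, coeff_C, if_neg (Ne.symm hm)]
    simpa [Finsupp.degree_eq_zero_iff] using hm

lemma stmt13.hom1 {A : Type*} [CommRing A] (p : MvPolynomial (Fin 2) A)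
    (h : p.IsHomogeneous 1) :
    p = C (coeff (Finsupp.single 0 1) p) * X 0 + C (coeff (Finsupp.single 1 1) p) * X 1 := by
  ext m
  rcases eq_or_ne (Finsupp.degree m) 1 with hd | hd
  · rw [stmt13.deg2] at hd
    have : (m 0 = 1 ∧ m 1 = 0) ∨ (m 0 = 0 ∧ m 1 = 1) := by omega
    rcases this with ⟨h0, h1⟩ | ⟨h0, h1⟩
    · have hm : m = Finsupp.single 0 1 := by
        ext j; fin_cases j <;> simp [h0, h1]
      subst hm
      simp [coeff_X', Finsupp.single_eq_single_iff]
    · have hm : m = Finsupp.single 1 1 := by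
        ext j; fin_cases j <;> simp [h0, h1]
      subst hm
      simp [coeff_X', Finsupp.single_eq_single_iff]
  · rw [h.coeff_eq_zero hd]
    have h0 : Finsupp.single (0 : Fin 2) 1 ≠ m := by rintro rfl; simp [stmt13.deg2] at hd
    have h1 : Finsupp.single (1 : Fin 2) 1 ≠ m := by rintro rfl; simp [stmt13.deg2] at hd
    simp [coeff_X', h0, h1]

lemma stmt13.XmulX {A : Type*} [CommRing A] :
    (X 0 * X 1 : MvPolynomial (Fin 2) A)
      = monomial (Finsupp.single 0 1 + Finsupp.single 1 1) 1 := by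
  rw [← pow_one (X 0 : MvPolynomial (Fin 2) A), ← pow_one (X 1 : MvPolynomial (Fin 2) A),
    X_pow_eq_monomial, X_pow_eq_monomial, monomial_mul, one_mul]

lemma stmt13.s02 : (Finsupp.single 0 2 : Fin 2 →₀ ℕ) ≠ Finsupp.single 0 1 + Finsupp.single 1 1 := by
  intro h; simpa using Finsupp.ext_iff.mp h 1
lemma stmt13.s12 : (Finsupp.single 1 2 : Fin 2 →₀ ℕ) ≠ Finsupp.single 0 1 + Finsupp.single 1 1 := by
  intro h; simpa using Finsupp.ext_iff.mp h 0
lemma stmt13.s0212 : (Finsupp.single 0 2 : Fin 2 →₀ ℕ) ≠ Finsupp.single 1 2 := by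
  intro h; simpa using Finsupp.ext_iff.mp h 0

/-- Linear independence of the degree-2 monomials in two variables. -/
lemma stmt13.coeffs_eq {A : Type*} [CommRing A] (p0 p1 p2 U0 U1 U2 : A)
    (h : (C U0 * X 0 ^ 2 + C U1 * (X 0 * X 1) + C U2 * X 1 ^ 2 : MvPolynomial (Fin 2) A)
       = C p0 * X 0 ^ 2 + C p1 * (X 0 * X 1) + C p2 * X 1 ^ 2) :
    p0 = U0 ∧ p1 = U1 ∧ p2 = U2 := by
  simp only [C_mul_X_pow_eq_monomial, stmt13.XmulX, C_mul_monomial, mul_one] at h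
  have h0 := congrArg (coeff (Finsupp.single 0 2)) h
  have h1 := congrArg (coeff (Finsupp.single 0 1 + Finsupp.single 1 1)) h
  have h2 := congrArg (coeff (Finsupp.single 1 2)) h
  simp [coeff_monomial, stmt13.s02, stmt13.s12, stmt13.s0212, stmt13.s0212.symm,
    stmt13.s02.symm, stmt13.s12.symm] at h0 h1 h2
  exact ⟨h0.symm, h1.symm, h2.symm⟩

lemma stmt13.sresVals {A : Type*} [CommRing A] (U V : ℕ → A) :
    sres 2 2 2 U V 2 = U 1 * V 2 - U 2 * V 1 ∧
    sres 2 2 2 U V 1 = -(U 0 * V 2 - U 2 * V 0) ∧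
    sres 2 2 2 U V 0 = U 0 * V 1 - U 1 * V 0 := by
  refine ⟨?_, ?_, ?_⟩ <;>
    simp [sres, subresMatrix, Matrix.det_fin_two, Fin.succAbove, Fin.lt_def] <;> ring

/-- `d1 = d2 = 2`. Let `f1 = U0 X1² + U1 X1X2 + U2 X2²` and
`f2 = V0 X1² + V1 X1X2 + V2 X2²` form a regular sequence over `A`.  Then the two
Sylvester forms of degree 1 are given explicitly by
`sylv_{(0,1)} = (U0V2 − U2V0) X1 + (U1V2 − U2V1) X2 = SRes_2 X2 − SRes_1 X1` and
`sylv_{(1,0)} = (U0V1 − U1V0) X1 + (U0V2 − U2V0) X2 = SRes_0 X1 − SRes_1 X2`,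
where `sylv_{(0,1)}` is `det` of any decomposition `f_i = X1 a_{i,1} + X2² a_{i,2}` and
`sylv_{(1,0)}` is `det` of any decomposition `f_i = X1² b_{i,1} + X2 b_{i,2}`. -/
theorem stmt13 {A : Type*} [CommRing A] [Nontrivial A]
    (U0 U1 U2 V0 V1 V2 : A) (U V : ℕ → A)
    (hU : U 0 = U0 ∧ U 1 = U1 ∧ U 2 = U2) (hV : V 0 = V0 ∧ V 1 = V1 ∧ V 2 = V2)
    (f1 f2 : MvPolynomial (Fin 2) A)
    (hf1 : f1 = C U0 * X 0 ^ 2 + C U1 * (X 0 * X 1) + C U2 * X 1 ^ 2)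
    (hf2 : f2 = C V0 * X 0 ^ 2 + C V1 * (X 0 * X 1) + C V2 * X 1 ^ 2)
    (hreg : RingTheory.Sequence.IsRegular (MvPolynomial (Fin 2) A) [f1, f2])
    -- a decomposition for `β = (0,1)`
    (a11 a12 a21 a22 : MvPolynomial (Fin 2) A)
    (ha11 : a11.IsHomogeneous 1) (ha12 : a12.IsHomogeneous 0)
    (ha21 : a21.IsHomogeneous 1) (ha22 : a22.IsHomogeneous 0)
    (hfa1 : f1 = X 0 * a11 + X 1 ^ 2 * a12)
    (hfa2 : f2 = X 0 * a21 + X 1 ^ 2 * a22)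
    -- a decomposition for `β = (1,0)`
    (b11 b12 b21 b22 : MvPolynomial (Fin 2) A)
    (hb11 : b11.IsHomogeneous 0) (hb12 : b12.IsHomogeneous 1)
    (hb21 : b21.IsHomogeneous 0) (hb22 : b22.IsHomogeneous 1)
    (hfb1 : f1 = X 0 ^ 2 * b11 + X 1 * b12)
    (hfb2 : f2 = X 0 ^ 2 * b21 + X 1 * b22) :
    (a11 * a22 - a12 * a21 =
        C (U0 * V2 - U2 * V0) * X 0 + C (U1 * V2 - U2 * V1) * X 1 ∧
      a11 * a22 - a12 * a21 =
        C (sres 2 2 2 U V 2) * X 1 - C (sres 2 2 2 U V 1) * X 0) ∧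
    (b11 * b22 - b12 * b21 =
        C (U0 * V1 - U1 * V0) * X 0 + C (U0 * V2 - U2 * V0) * X 1 ∧
      b11 * b22 - b12 * b21 =
        C (sres 2 2 2 U V 0) * X 0 - C (sres 2 2 2 U V 1) * X 1) := by
  obtain ⟨hU0, hU1, hU2⟩ := hU
  obtain ⟨hV0, hV1, hV2⟩ := hV
  obtain ⟨hs2, hs1, hs0⟩ := stmt13.sresVals U V
  simp only [hU0, hU1, hU2, hV0, hV1, hV2] at hs2 hs1 hs0
  -- identify the coefficients of all decompositions
  have Ea1 := stmt13.hom1 a11 ha11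
  have Ea2 := stmt13.hom0 a12 ha12
  have Ea3 := stmt13.hom1 a21 ha21
  have Ea4 := stmt13.hom0 a22 ha22
  have Eb1 := stmt13.hom0 b11 hb11
  have Eb2 := stmt13.hom1 b12 hb12
  have Eb3 := stmt13.hom0 b21 hb21
  have Eb4 := stmt13.hom1 b22 hb22
  have hfa1' := hfa1; rw [Ea1, Ea2] at hfa1'
  have hfa2' := hfa2; rw [Ea3, Ea4] at hfa2'
  have hfb1' := hfb1; rw [Eb1, Eb2] at hfb1'
  have hfb2' := hfb2; rw [Eb3, Eb4] at hfb2'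
  obtain ⟨ca0, ca1, ca2⟩ := stmt13.coeffs_eq (coeff (Finsupp.single 0 1) a11)
    (coeff (Finsupp.single 1 1) a11) (coeff 0 a12) U0 U1 U2
    (by rw [← hf1, hfa1']; ring)
  obtain ⟨cb0, cb1, cb2⟩ := stmt13.coeffs_eq (coeff (Finsupp.single 0 1) a21)
    (coeff (Finsupp.single 1 1) a21) (coeff 0 a22) V0 V1 V2
    (by rw [← hf2, hfa2']; ring)
  obtain ⟨da0, da1, da2⟩ := stmt13.coeffs_eq (coeff 0 b11)
    (coeff (Finsupp.single 0 1) b12) (coeff (Finsupp.single 1 1) b12) U0 U1 U2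
    (by rw [← hf1, hfb1']; ring)
  obtain ⟨db0, db1, db2⟩ := stmt13.coeffs_eq (coeff 0 b21)
    (coeff (Finsupp.single 0 1) b22) (coeff (Finsupp.single 1 1) b22) V0 V1 V2
    (by rw [← hf2, hfb2']; ring)
  have Pa : a11 * a22 - a12 * a21 =
      C (U0 * V2 - U2 * V0) * X 0 + C (U1 * V2 - U2 * V1) * X 1 := by
    rw [Ea1, Ea2, Ea3, Ea4, ca0, ca1, ca2, cb0, cb1, cb2]
    simp only [map_sub, map_mul]
    ring
  have Pb : b11 * b22 - b12 * b21 =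
      C (U0 * V1 - U1 * V0) * X 0 + C (U0 * V2 - U2 * V0) * X 1 := by
    rw [Eb1, Eb2, Eb3, Eb4, da0, da1, da2, db0, db1, db2]
    simp only [map_sub, map_mul]
    ring
  refine ⟨⟨Pa, ?_⟩, Pb, ?_⟩
  · rw [Pa, hs2, hs1]; simp only [map_sub, map_mul, map_neg]; ring
  · rw [Pb, hs0, hs1]; simp only [map_sub, map_mul, map_neg]; ring

end
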